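/- For u4 < u3 < u2 < u1, the function I(u1,u2,u3,u4) = ∫_{u2}^{u1} dη/√((u1-η)(η-u2)(η-u3)(η-u4)) satisfies the Euler–Poisson–Darboux equations 2(u_i - u_j) ∂²I/∂u_i∂u_j = ∂I/∂u_i - ∂I/∂u_j for i,j ∈ {3,4} (i.e., for the variables in which the integrand is smooth on the integration interval). -/

import Mathlib

/-
On `[u2, u1]` the integrand is `w η * (η - u3) ^ (-1/2) * (η - u4) ^ (-1/2)` with the weight
`w η = ((u1 - η) * (η - u2)) ^ (-1/2)`, which is integrable (an antiderivative is an arcsine).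
For any integrable weight `w`, the integral `I s t x y = ∫ w η (η - x) ^ (-s) (η - y) ^ (-t)` may
be differentiated under the integral sign while `x, y` stay below the interval, giving
`∂ₓ I s t = s I (s + 1) t` and `∂_y I s t = t I s (t + 1)`. The identity
`(η - y) - (η - x) = x - y` gives `I (s + 1) t - I s (t + 1) = (x - y) I (s + 1) (t + 1)`, which is
the Euler–Poisson–Darboux equation `(x - y) ∂ₓ∂_y I = t ∂ₓ I - s ∂_y I`; take `s = t = 1/2`.
-/
open Real MeasureTheory Set intervalIntegral

/-- The complete hyperelliptic integral I(u1,u2,u3,u4). -/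
noncomputable def Ifun (u1 u2 u3 u4 : ℝ) : ℝ :=
  ∫ η in u2..u1, 1 / Real.sqrt ((u1 - η) * (η - u2) * (η - u3) * (η - u4))

noncomputable def rpowKernelIntegral (w : ℝ → ℝ) (a b s t x y : ℝ) : ℝ :=
  ∫ η in a..b, w η * (η - x) ^ (-s) * (η - y) ^ (-t)

section RpowKernelIntegral

variable {w : ℝ → ℝ} {a b s t x y : ℝ}

lemma IntervalIntegrable.mul_rpow_sub (hw : IntervalIntegrable w volume a b) (hab : a ≤ b)
    (hx : x < a) (r : ℝ) : IntervalIntegrable (fun η => w η * (η - x) ^ r) volume a b := by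
  refine hw.mul_continuousOn fun η hη => ?_
  rw [uIcc_of_le hab] at hη
  exact (ContinuousAt.rpow_const (continuousAt_id.sub continuousAt_const)
    (Or.inl (sub_pos.2 (hx.trans_le hη.1)).ne')).continuousWithinAt

lemma hasDerivAt_integral_mul_rpow_sub (hw : IntervalIntegrable w volume a b) (hab : a ≤ b)
    (hx : x < a) (hs : -1 ≤ s) :
    HasDerivAt (fun x => ∫ η in a..b, w η * (η - x) ^ (-s))
      (s * ∫ η in a..b, w η * (η - x) ^ (-(s + 1))) x := by
  set ε := (a - x) / 2
  have hε : 0 < ε := by simp only [ε]; linarith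
  have hgap : ∀ η ∈ uIoc a b, ∀ y ∈ Metric.ball x ε, ε ≤ η - y := by
    intro η hη y hy
    rw [uIoc_of_le hab] at hη
    rw [Metric.mem_ball, Real.dist_eq, abs_lt] at hy
    simp only [ε] at hy ⊢
    linarith [hη.1]
  have hmeas : ∀ y (r : ℝ), AEStronglyMeasurable (fun η => w η * (η - y) ^ r)
      (volume.restrict (uIoc a b)) := by
    intro y r
    rw [uIoc_of_le hab]
    exact hw.1.aestronglyMeasurable.mul
      (by fun_prop : Measurable fun η => (η - y) ^ r).aestronglyMeasurable
  have hderiv : ∀ η y, y < η → HasDerivAt (fun y => w η * (η - y) ^ (-s))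
      (s * (w η * (η - y) ^ (-(s + 1)))) y := by
    intro η y hy
    have := ((hasDerivAt_id y).const_sub η).rpow_const (p := -s) (Or.inl (sub_pos.2 hy).ne')
    refine (this.const_mul (w η)).congr_deriv ?_
    rw [neg_add', id]
    ring
  rw [← intervalIntegral.integral_const_mul]
  refine (intervalIntegral.hasDerivAt_integral_of_dominated_loc_of_deriv_le
    (F := fun y η => w η * (η - y) ^ (-s)) (F' := fun y η => s * (w η * (η - y) ^ (-(s + 1))))
    (bound := fun η => |s| * (‖w η‖ * ε ^ (-(s + 1)))) (Metric.ball_mem_nhds x hε)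
    (Filter.Eventually.of_forall fun y => hmeas y _) (hw.mul_rpow_sub hab hx _)
    ((hmeas x _).const_mul s) (Filter.Eventually.of_forall fun η hη y hy => ?_)
    ((hw.norm.mul_const _).const_mul _)
    (Filter.Eventually.of_forall fun η hη y hy =>
      hderiv η y (by linarith [hgap η hη y hy]))).2
  have hηy := hgap η hη y hy
  rw [norm_mul, norm_mul, Real.norm_of_nonneg (rpow_nonneg (hε.le.trans hηy) _),
    Real.norm_eq_abs s]
  have hpow := rpow_le_rpow_of_nonpos hε hηy (by linarith : -(s + 1) ≤ 0)
  gcongr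

lemma hasDerivAt_rpowKernelIntegral_left (hw : IntervalIntegrable w volume a b) (hab : a ≤ b)
    (hx : x < a) (hy : y < a) (hs : -1 ≤ s) :
    HasDerivAt (fun x => rpowKernelIntegral w a b s t x y)
      (s * rpowKernelIntegral w a b (s + 1) t x y) x := by
  have hswap : ∀ (x r : ℝ), (fun η => w η * (η - x) ^ r * (η - y) ^ (-t)) =
      fun η => w η * (η - y) ^ (-t) * (η - x) ^ r :=
    fun x r => funext fun η => mul_right_comm _ _ _
  simpa only [rpowKernelIntegral, hswap] using
    hasDerivAt_integral_mul_rpow_sub (hw.mul_rpow_sub hab hy _) hab hx hs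

lemma hasDerivAt_rpowKernelIntegral_right (hw : IntervalIntegrable w volume a b) (hab : a ≤ b)
    (hx : x < a) (hy : y < a) (ht : -1 ≤ t) :
    HasDerivAt (fun y => rpowKernelIntegral w a b s t x y)
      (t * rpowKernelIntegral w a b s (t + 1) x y) y :=
  hasDerivAt_integral_mul_rpow_sub (hw.mul_rpow_sub hab hx _) hab hy ht

lemma rpowKernelIntegral_sub (hw : IntervalIntegrable w volume a b) (hab : a ≤ b)
    (hx : x < a) (hy : y < a) :
    rpowKernelIntegral w a b (s + 1) t x y - rpowKernelIntegral w a b s (t + 1) x y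
      = (x - y) * rpowKernelIntegral w a b (s + 1) (t + 1) x y := by
  have hint : ∀ s t : ℝ, IntervalIntegrable (fun η => w η * (η - x) ^ (-s) * (η - y) ^ (-t))
      volume a b := fun s t => (hw.mul_rpow_sub hab hx _).mul_rpow_sub hab hy _
  rw [rpowKernelIntegral, rpowKernelIntegral, rpowKernelIntegral, ← integral_sub (hint _ _)
    (hint _ _), ← intervalIntegral.integral_const_mul]
  refine integral_congr fun η hη => ?_
  rw [uIcc_of_le hab] at hη
  have hηx : η - x ≠ 0 := (sub_pos.2 (hx.trans_le hη.1)).ne'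
  have hηy : η - y ≠ 0 := (sub_pos.2 (hy.trans_le hη.1)).ne'
  rw [show -s = -(s + 1) + 1 by ring, show -t = -(t + 1) + 1 by ring,
    rpow_add_one hηx, rpow_add_one hηy]
  ring

theorem rpowKernelIntegral_epd (hw : IntervalIntegrable w volume a b) (hab : a ≤ b)
    (hx : x < a) (hy : y < a) (hs : -1 ≤ s) (ht : -1 ≤ t) :
    (x - y) * deriv (fun x' => deriv (fun y' => rpowKernelIntegral w a b s t x' y') y) x
        = t * deriv (fun x' => rpowKernelIntegral w a b s t x' y) x
          - s * deriv (fun y' => rpowKernelIntegral w a b s t x y') y ∧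
    (y - x) * deriv (fun y' => deriv (fun x' => rpowKernelIntegral w a b s t x' y') x) y
        = s * deriv (fun y' => rpowKernelIntegral w a b s t x y') y
          - t * deriv (fun x' => rpowKernelIntegral w a b s t x' y) x := by
  have hxy : deriv (fun x' => deriv (fun y' => rpowKernelIntegral w a b s t x' y') y) x
      = t * (s * rpowKernelIntegral w a b (s + 1) (t + 1) x y) := by
    refine ((hasDerivAt_rpowKernelIntegral_left hw hab hx hy hs).const_mul t).deriv ▸
      Filter.EventuallyEq.deriv_eq ?_
    filter_upwards [Iio_mem_nhds hx] with x' hx'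
    exact (hasDerivAt_rpowKernelIntegral_right hw hab hx' hy ht).deriv
  have hyx : deriv (fun y' => deriv (fun x' => rpowKernelIntegral w a b s t x' y') x) y
      = s * (t * rpowKernelIntegral w a b (s + 1) (t + 1) x y) := by
    refine ((hasDerivAt_rpowKernelIntegral_right hw hab hx hy ht).const_mul s).deriv ▸
      Filter.EventuallyEq.deriv_eq ?_
    filter_upwards [Iio_mem_nhds hy] with y' hy'
    exact (hasDerivAt_rpowKernelIntegral_left hw hab hx hy' hs).deriv
  have hsub := rpowKernelIntegral_sub (s := s) (t := t) hw hab hx hy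
  rw [hxy, hyx, (hasDerivAt_rpowKernelIntegral_left hw hab hx hy hs).deriv,
    (hasDerivAt_rpowKernelIntegral_right hw hab hx hy ht).deriv]
  constructor
  · linear_combination (-(s * t)) * hsub
  · linear_combination (s * t) * hsub

end RpowKernelIntegral

lemma intervalIntegrable_one_div_sqrt_mul_sub {a b : ℝ} (hab : a < b) :
    IntervalIntegrable (fun η => 1 / √((b - η) * (η - a))) volume a b := by
  set c := 2 / (b - a)
  have hba : b - a ≠ 0 := (sub_pos.2 hab).ne'
  have hc : 0 < c := div_pos two_pos (sub_pos.2 hab)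
  -- antiderivative: `arcsin` of the affine map sending `[a, b]` onto `[-1, 1]`
  refine intervalIntegrable_deriv_of_nonneg (g := fun η => arcsin (c * η - (a + b) / (b - a)))
    (by fun_prop) (fun η hη => ?_) (fun η _ => by positivity)
  rw [min_eq_left hab.le, max_eq_right hab.le] at hη
  set t := c * η - (a + b) / (b - a)
  have hP : 0 < (b - η) * (η - a) := mul_pos (by linarith [hη.2]) (by linarith [hη.1])
  have ht : 1 - t ^ 2 = c ^ 2 * ((b - η) * (η - a)) := by
    simp only [t, c]; field_simp; ring
  have ht1 : t ^ 2 < 1 := by nlinarith [mul_pos (pow_pos hc 2) hP]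
  have hinner : HasDerivAt (fun η => c * η - (a + b) / (b - a)) c η := by
    simpa using ((hasDerivAt_id η).const_mul c).sub_const ((a + b) / (b - a))
  refine ((hasDerivAt_arcsin (x := t) (by nlinarith) (by nlinarith)).comp η hinner).congr_deriv ?_
  rw [ht, sqrt_mul' _ hP.le, sqrt_sq hc.le]
  field_simp

lemma Ifun_eq_rpowKernelIntegral {u1 u2 x y : ℝ} (h21 : u2 ≤ u1) (hx : x ≤ u2) (hy : y ≤ u2) :
    Ifun u1 u2 x y =
      rpowKernelIntegral (fun η => 1 / √((u1 - η) * (η - u2))) u2 u1 (1 / 2) (1 / 2) x y := by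
  refine integral_congr fun η hη => ?_
  rw [uIcc_of_le h21] at hη
  have hP : 0 ≤ (u1 - η) * (η - u2) := mul_nonneg (by linarith [hη.2]) (by linarith [hη.1])
  have hηx : 0 ≤ η - x := by linarith [hη.1]
  have hηy : 0 ≤ η - y := by linarith [hη.1]
  rw [sqrt_mul (mul_nonneg hP hηx), sqrt_mul hP, rpow_neg hηx, rpow_neg hηy,
    ← sqrt_eq_rpow, ← sqrt_eq_rpow]
  ring

lemma deriv_deriv_congr_of_eqOn {f g : ℝ → ℝ → ℝ} {U V : Set ℝ} (hU : IsOpen U) (hV : IsOpen V)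
    (hfg : ∀ x ∈ U, EqOn (f x) (g x) V) {x y : ℝ} (hx : x ∈ U) (hy : y ∈ V) :
    deriv (fun x' => deriv (f x') y) x = deriv (fun x' => deriv (g x') y) x :=
  EqOn.deriv (fun x' hx' => (hfg x' hx').deriv hV hy) hU hx

theorem I_EPD (u1 u2 u3 u4 : ℝ) (h43 : u4 < u3) (h32 : u3 < u2) (h21 : u2 < u1) :
    2 * (u3 - u4) * deriv (fun x => deriv (fun y => Ifun u1 u2 x y) u4) u3
        = deriv (fun x => Ifun u1 u2 x u4) u3 - deriv (fun y => Ifun u1 u2 u3 y) u4 ∧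
    2 * (u4 - u3) * deriv (fun y => deriv (fun x => Ifun u1 u2 x y) u3) u4
        = deriv (fun y => Ifun u1 u2 u3 y) u4 - deriv (fun x => Ifun u1 u2 x u4) u3 := by
  have h42 : u4 < u2 := h43.trans h32
  set K := rpowKernelIntegral (fun η => 1 / √((u1 - η) * (η - u2))) u2 u1 (1 / 2) (1 / 2)
  have hIK : ∀ x ∈ Iio u2, EqOn (Ifun u1 u2 x) (K x) (Iio u2) :=
    fun x hx y hy => Ifun_eq_rpowKernelIntegral h21.le (le_of_lt hx) (le_of_lt hy)
  have hIK' : ∀ y ∈ Iio u2, EqOn (fun x => Ifun u1 u2 x y) (fun x => K x y) (Iio u2) :=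
    fun y hy x hx => hIK x hx hy
  obtain ⟨epd_xy, epd_yx⟩ := rpowKernelIntegral_epd (intervalIntegrable_one_div_sqrt_mul_sub h21)
    h21.le h32 h42 (s := 1 / 2) (t := 1 / 2) (by norm_num) (by norm_num)
  rw [deriv_deriv_congr_of_eqOn isOpen_Iio isOpen_Iio hIK h32 h42,
    deriv_deriv_congr_of_eqOn isOpen_Iio isOpen_Iio hIK' h42 h32,
    (hIK' u4 h42).deriv isOpen_Iio h32, (hIK u3 h32).deriv isOpen_Iio h42]
  constructor
  · linear_combination 2 * epd_xy
  · linear_combination 2 * epd_yx
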